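/- arXiv:2410.12493 — 6 statements merged into one kernel-verified Lean document; each statement's English description precedes it below -/
import Mathlib

section
/- A finite partial order (P, <) is an interval order if and only if it contains no induced '2+2' suborder, i.e., there are no four elements a, b, c, d with a < b, c < d, but neither a < d nor c < b. -/
/-- A strict relation is an interval order if it arises from real intervals:
`x < y` iff the interval of `x` ends strictly before that of `y` begins. -/
def IsIntervalOrder {P : Type*} (lt : P → P → Prop) : Prop :=
  ∃ Ilo Ihi : P → ℝ, (∀ x, Ilo x ≤ Ihi x) ∧ ∀ x y, lt x y ↔ Ihi x < Ilo y

/-- A finite partial order is an interval order iff it contains no induced 2+2 suborder. -/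
theorem stmt0 {P : Type*} [Fintype P] [PartialOrder P] :
    IsIntervalOrder (fun x y : P => x < y) ↔
      ¬ ∃ a b c d : P, a < b ∧ c < d ∧ ¬ a < d ∧ ¬ c < b := by
  constructor
  · rintro ⟨Ilo, Ihi, hle, hiff⟩ ⟨a, b, c, d, hab, hcd, had, hcb⟩
    simp only [hiff] at hab hcd had hcb
    rcases le_total (Ihi a) (Ihi c) with h | h
    · exact had (lt_of_le_of_lt h hcd)
    · exact hcb (lt_of_le_of_lt h hab)
  · intro h22
    classical
    set D : P → Set P := fun x => {y | y < x} with hD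
    have chain : ∀ y z : P, D y ⊆ D z ∨ D z ⊆ D y := by
      intro y z
      by_contra hc
      push_neg at hc
      obtain ⟨a, ha, haz⟩ := Set.not_subset.mp hc.1
      obtain ⟨c, hcz, hcy⟩ := Set.not_subset.mp hc.2
      exact h22 ⟨a, y, c, z, ha, hcz, haz, hcy⟩
    set l : P → ℕ := fun x => Set.ncard {s : Set P | (∃ y, s = D y) ∧ s ⊂ D x} with hl
    have hDmono : ∀ x y : P, x < y → D x ⊂ D y := by
      intro x y hxy
      constructor
      · intro a ha; exact lt_trans ha hxy
      · intro hsub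
        exact lt_irrefl x (hsub hxy)
    have hlmono : ∀ x y : P, D x ⊂ D y → l x < l y := by
      intro x y hxy
      apply Set.ncard_lt_ncard
      · constructor
        · rintro s ⟨hs, hsx⟩; exact ⟨hs, hsx.trans hxy⟩
        · intro hsub
          have h2 : (∃ z, D x = D z) ∧ D x ⊂ D x := hsub ⟨⟨x, rfl⟩, hxy⟩
          exact (ssubset_irrefl _) h2.2
      · exact Set.toFinite _
    have hsub_of_le : ∀ y z : P, l z ≤ l y → D z ⊆ D y := by
      intro y z hlz
      rcases chain z y with h | h
      · exact h
      rcases eq_or_ne (D y) (D z) with he | hne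
      · rw [he]
      · exact absurd (hlmono y z (ssubset_of_subset_of_ne h hne))
          (not_lt.mpr hlz)
    have hlbound : ∀ y : P, l y ≤ Nat.card (Set P) := by
      intro y
      calc l y ≤ (Set.univ : Set (Set P)).ncard :=
            Set.ncard_le_ncard (Set.subset_univ _) (Set.toFinite _)
        _ = Nat.card (Set P) := Set.ncard_univ _
    refine ⟨fun x => (l x : ℝ),
      fun x => if h : ∃ z, x < z then ((sInf (l '' {z | x < z}) : ℕ) : ℝ) - 1/2
               else (Nat.card (Set P) : ℝ), ?_, ?_⟩
    · intro x
      by_cases h : ∃ z, x < z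
      · simp only [dif_pos h]
        have hne : (l '' {z | x < z}).Nonempty := by
          obtain ⟨z, hz⟩ := h
          exact ⟨l z, z, hz, rfl⟩
        obtain ⟨m, hm, hmeq⟩ := Nat.sInf_mem hne
        have hlt : l x < l m := hlmono x m (hDmono x m hm)
        have : (l x : ℝ) + 1 ≤ (l m : ℝ) := by exact_mod_cast hlt
        rw [← hmeq]
        push_cast [← hmeq] at this ⊢
        linarith
      · simp only [dif_neg h]
        exact_mod_cast hlbound x
    · intro x y
      constructor
      · intro hxy
        have h : ∃ z, x < z := ⟨y, hxy⟩
        simp only [dif_pos h]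
        have hle' : sInf (l '' {z | x < z}) ≤ l y :=
          Nat.sInf_le ⟨y, hxy, rfl⟩
        have : ((sInf (l '' {z | x < z}) : ℕ) : ℝ) ≤ (l y : ℝ) := by exact_mod_cast hle'
        linarith
      · intro hlt
        by_cases h : ∃ z, x < z
        · simp only [dif_pos h] at hlt
          have hne : (l '' {z | x < z}).Nonempty := by
            obtain ⟨z, hz⟩ := h
            exact ⟨l z, z, hz, rfl⟩
          obtain ⟨m, hm, hmeq⟩ := Nat.sInf_mem hne
          have h1 : (l m : ℝ) - 1/2 < (l y : ℝ) := by rw [hmeq]; exact hlt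
          have h2 : l m ≤ l y := by
            by_contra hcon
            push_neg at hcon
            have : (l y : ℝ) + 1 ≤ (l m : ℝ) := by exact_mod_cast hcon
            linarith
          have : D m ⊆ D y := hsub_of_le y m h2
          exact this hm
        · simp only [dif_neg h] at hlt
          exact absurd hlt (not_lt.mpr (by exact_mod_cast hlbound y))
end

section
/- The gluing of two interval orders is an interval order: if (P, <P) and (Q, <Q) are finite interval orders on disjoint sets with designated subsets T ⊆ P of maximal elements and S ⊆ Q of minimal elements and a bijection identifying T with S, then the order on P ∪ (Q \ S) defined as the transitive closure of <P ∪ <Q ∪ (P \ T) × (Q \ S) is again an interval order. -/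
lemma transGen_intervalOrder {X : Type*} {R : X → X → Prop} {lo hi : X → ℝ}
    (hle : ∀ x, lo x ≤ hi x) (hiff : ∀ x y, R x y ↔ hi x < lo y) :
    IsIntervalOrder (Relation.TransGen R) := by
  refine ⟨lo, hi, hle, fun x y => ⟨?_, fun h => Relation.TransGen.single ((hiff x y).2 h)⟩⟩
  intro h
  induction h with
  | single h => exact (hiff _ _).1 h
  | tail _ h ih => exact lt_of_lt_of_le ih (le_trans (hle _) (le_of_lt ((hiff _ _).1 h)))

/-- Gluing of interval orders is an interval order: given finite interval orders on `P` and
`Q`, a set `T` of maximal elements of `P` and a set `S` of minimal elements of `Q`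
identified via a bijection `e`, the order on `P ∪ (Q \ S)` obtained as the transitive
closure of `<P ∪ <Q ∪ (P \ T) × (Q \ S)` is again an interval order. -/
theorem stmt2 {P Q : Type*} [Fintype P] [Fintype Q]
    (ltP : P → P → Prop) (ltQ : Q → Q → Prop)
    (hP : IsIntervalOrder ltP) (hQ : IsIntervalOrder ltQ)
    (T : Set P) (S : Set Q)
    (hT : ∀ a ∈ T, ∀ b, ¬ ltP a b)
    (hS : ∀ a ∈ S, ∀ b, ¬ ltQ b a)
    (e : T ≃ S) :
    IsIntervalOrder (Relation.TransGen
      (fun x y : P ⊕ {q : Q // q ∉ S} =>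
        match x, y with
        | Sum.inl a, Sum.inl b => ltP a b
        | Sum.inr a, Sum.inr b => ltQ a.1 b.1
        | Sum.inl a, Sum.inr b => a ∉ T ∨ ∃ h : a ∈ T, ltQ (e ⟨a, h⟩).1 b.1
        | Sum.inr _, Sum.inl _ => False)) := by
  obtain ⟨loP, hiP, hPle, hPiff⟩ := hP
  obtain ⟨loQ, hiQ, hQle, hQiff⟩ := hQ
  obtain ⟨M, hM⟩ := Finite.exists_le hiP
  obtain ⟨m, hm⟩ := Finite.exists_le (fun q : Q => -loQ q)
  have hloQ : ∀ q : Q, -m ≤ loQ q := fun q => by have := hm q; linarith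
  have hhiQ : ∀ q : Q, -m ≤ hiQ q := fun q => le_trans (hloQ q) (hQle q)
  set C : ℝ := M + m + 1 with hC
  have hshift_lo : ∀ q : Q, M < loQ q + C := fun q => by have := hloQ q; simp [hC]; linarith
  have hshift_hi : ∀ q : Q, M < hiQ q + C := fun q => lt_of_lt_of_le (hshift_lo q)
    (by have := hQle q; linarith)
  classical
  set lo : P ⊕ {q : Q // q ∉ S} → ℝ := fun x =>
    match x with
    | Sum.inl a => loP a
    | Sum.inr b => loQ b.1 + C with hlo
  set hi : P ⊕ {q : Q // q ∉ S} → ℝ := fun x =>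
    match x with
    | Sum.inl a => if h : a ∈ T then hiQ (e ⟨a, h⟩).1 + C else hiP a
    | Sum.inr b => hiQ b.1 + C with hhi
  have hle : ∀ x, lo x ≤ hi x := by
    rintro (a | b)
    · simp only [hlo, hhi]
      by_cases h : a ∈ T
      · rw [dif_pos h]
        have := hshift_hi (e ⟨a, h⟩).1
        have := hPle a
        have := hM a
        linarith
      · rw [dif_neg h]; exact hPle a
    · simpa only [hlo, hhi] using add_le_add_left (hQle b.1) C
  apply transGen_intervalOrder hle
  rintro (a | a) (b | b)
  · -- inl inl
    simp only [hlo, hhi]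
    by_cases h : a ∈ T
    · rw [dif_pos h]
      constructor
      · intro hab; exact absurd hab (hT a h b)
      · intro hlt
        have := hshift_hi (e ⟨a, h⟩).1
        have := hM b
        have := hPle b
        linarith
    · rw [dif_neg h]; exact hPiff a b
  · -- inl inr
    simp only [hlo, hhi]
    by_cases h : a ∈ T
    · rw [dif_pos h]
      constructor
      · rintro (h' | ⟨h', hlt⟩)
        · exact absurd h h'
        · exact add_lt_add_left ((hQiff _ _).1 hlt) C
      · intro hlt
        exact Or.inr ⟨h, (hQiff _ _).2 (by linarith)⟩
    · rw [dif_neg h]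
      constructor
      · intro _
        have := hshift_lo b.1
        have := hM a
        linarith
      · intro _; exact Or.inl h
  · -- inr inl
    simp only [hlo, hhi]
    constructor
    · exact False.elim
    · intro hlt
      have := hshift_hi a.1
      have := hM b
      have := hPle b
      linarith
  · -- inr inr
    simp only [hlo, hhi]
    rw [hQiff]
    constructor <;> intro <;> linarith
end

section
/- Gluing of interval pomsets with interfaces is associative: for pomsets P, Q, R with T_P = S_Q and T_Q = S_R, one has (P * Q) * R = P * (Q * R). -/
/-- An interval pomset with interfaces over a universe `E` of events and alphabet `A`:
a carrier set of events, a precedence order, an event order, starting and terminating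
interfaces, and a labeling. -/
structure IIPomset (E A : Type*) where
  carrier : Set E
  lt : E → E → Prop
  ev : E → E → Prop
  S : Set E
  T : Set E
  lab : E → A

open Classical in
/-- Gluing `P * Q` (defined when `P.T = Q.S`, the shared events being identified):
carrier `P ∪ Q`, precedence the transitive closure of `<P ∪ <Q ∪ (P \ T_P) × (Q \ S_Q)`,
event order the union, starting interface `S_P`, terminating interface `T_Q`. -/
noncomputable def IIPomset.glue {E A : Type*} (P Q : IIPomset E A) : IIPomset E A where
  carrier := P.carrier ∪ Q.carrier
  lt := Relation.TransGen (fun x y =>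
    P.lt x y ∨ Q.lt x y ∨
      ((x ∈ P.carrier ∧ x ∉ P.T) ∧ (y ∈ Q.carrier ∧ y ∉ Q.S)))
  ev := fun x y => P.ev x y ∨ Q.ev x y
  S := P.S
  T := Q.T
  lab := fun x => if x ∈ P.carrier then P.lab x else Q.lab x

/-- Well-formedness of an interval pomset with interfaces (the parts relevant here):
the orders are confined to the carrier and strict, `S` consists of minimal elements,
`T` of maximal elements, and the interfaces lie in the carrier. -/
structure IIPomset.WF {E A : Type*} (P : IIPomset E A) : Prop where
  lt_mem : ∀ x y, P.lt x y → x ∈ P.carrier ∧ y ∈ P.carrier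
  ev_mem : ∀ x y, P.ev x y → x ∈ P.carrier ∧ y ∈ P.carrier
  lt_irrefl : ∀ x, ¬ P.lt x x
  lt_trans : ∀ x y z, P.lt x y → P.lt y z → P.lt x z
  S_sub : P.S ⊆ P.carrier
  T_sub : P.T ⊆ P.carrier
  S_min : ∀ x ∈ P.S, ∀ y, ¬ P.lt y x
  T_max : ∀ x ∈ P.T, ∀ y, ¬ P.lt x y

private lemma transGen_le_transGen {E : Type*} {r s : E → E → Prop}
    (h : ∀ x y, r x y → Relation.TransGen s x y) :
    ∀ x y, Relation.TransGen r x y → Relation.TransGen s x y := by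
  intro x y hxy
  induction hxy with
  | single h' => exact h _ _ h'
  | tail _ h' ih => exact ih.trans (h _ _ h')

/-- Gluing of interval pomsets with interfaces is associative: if `T_P = S_Q` and
`T_Q = S_R` then `(P * Q) * R = P * (Q * R)`. -/
theorem stmt3 {E A : Type*} (P Q R : IIPomset E A)
    (hP : P.WF) (hQ : Q.WF) (hR : R.WF)
    (hPQ : P.T = Q.S) (hQR : Q.T = R.S)
    (hPQcap : P.carrier ∩ Q.carrier = Q.S)
    (hQRcap : Q.carrier ∩ R.carrier = R.S)
    (hPRcap : P.carrier ∩ R.carrier ⊆ Q.S ∩ Q.T) :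
    (P.glue Q).glue R = P.glue (Q.glue R) := by
  have carrier_assoc : ((P.glue Q).glue R).carrier = (P.glue (Q.glue R)).carrier :=
    Set.union_assoc _ _ _
  -- the two base step relations after unfolding glue once on each side
  set L : E → E → Prop := fun x y =>
      (P.glue Q).lt x y ∨ R.lt x y ∨
        ((x ∈ (P.glue Q).carrier ∧ x ∉ (P.glue Q).T) ∧ (y ∈ R.carrier ∧ y ∉ R.S)) with hL
  set Rr : E → E → Prop := fun x y =>
      P.lt x y ∨ (Q.glue R).lt x y ∨
        ((x ∈ P.carrier ∧ x ∉ P.T) ∧ (y ∈ (Q.glue R).carrier ∧ y ∉ (Q.glue R).S)) with hRr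
  have hQS_sub : Q.S ⊆ Q.carrier := hQ.S_sub
  have hQT_sub : Q.T ⊆ Q.carrier := hQ.T_sub
  have hLR : ∀ x y, L x y → Relation.TransGen Rr x y := by
    intro x y hxy
    rcases hxy with h | h | ⟨⟨hx, hxT⟩, hy⟩
    · -- (P.glue Q).lt is a TransGen; embed each of its steps
      refine transGen_le_transGen (r := fun x y =>
        P.lt x y ∨ Q.lt x y ∨
          ((x ∈ P.carrier ∧ x ∉ P.T) ∧ (y ∈ Q.carrier ∧ y ∉ Q.S))) ?_ _ _ h
      intro a b hab
      rcases hab with h | h | ⟨ha, hb⟩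
      · exact Relation.TransGen.single (Or.inl h)
      · exact Relation.TransGen.single (Or.inr (Or.inl
          (Relation.TransGen.single (Or.inl h))))
      · exact Relation.TransGen.single (Or.inr (Or.inr ⟨ha, Or.inl hb.1, hb.2⟩))
    · exact Relation.TransGen.single (Or.inr (Or.inl
        (Relation.TransGen.single (Or.inr (Or.inl h)))))
    · -- cross step: x ∈ P ∪ Q, x ∉ Q.T, y ∈ R \ R.S
      have hyQS : y ∉ Q.S := by
        intro hyQ
        exact hy.2 (hQRcap ▸ ⟨hQS_sub hyQ, hy.1⟩)
      rcases hx with hxP | hxQ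
      · by_cases hxPT : x ∈ P.T
        · -- then x ∈ Q.S so x ∈ Q, and x ∉ Q.T
          have hxQ : x ∈ Q.carrier := hQS_sub (hPQ ▸ hxPT)
          exact Relation.TransGen.single (Or.inr (Or.inl
            (Relation.TransGen.single (Or.inr (Or.inr ⟨⟨hxQ, hxT⟩, hy⟩)))))
        · exact Relation.TransGen.single (Or.inr (Or.inr
            ⟨⟨hxP, hxPT⟩, Or.inr hy.1, hyQS⟩))
      · exact Relation.TransGen.single (Or.inr (Or.inl
          (Relation.TransGen.single (Or.inr (Or.inr ⟨⟨hxQ, hxT⟩, hy⟩)))))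
  have hRL : ∀ x y, Rr x y → Relation.TransGen L x y := by
    intro x y hxy
    rcases hxy with h | h | ⟨⟨hx, hxT⟩, hy⟩
    · exact Relation.TransGen.single (Or.inl (Relation.TransGen.single (Or.inl h)))
    · refine transGen_le_transGen (r := fun x y =>
        Q.lt x y ∨ R.lt x y ∨
          ((x ∈ Q.carrier ∧ x ∉ Q.T) ∧ (y ∈ R.carrier ∧ y ∉ R.S))) ?_ _ _ h
      intro a b hab
      rcases hab with h | h | ⟨ha, hb⟩
      · exact Relation.TransGen.single (Or.inl
          (Relation.TransGen.single (Or.inr (Or.inl h))))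
      · exact Relation.TransGen.single (Or.inr (Or.inl h))
      · exact Relation.TransGen.single (Or.inr (Or.inr ⟨⟨Or.inr ha.1, ha.2⟩, hb⟩))
    · -- cross step: x ∈ P \ P.T, y ∈ (Q ∪ R) \ Q.S
      rcases hy.1 with hyQ | hyR
      · exact Relation.TransGen.single (Or.inl (Relation.TransGen.single
          (Or.inr (Or.inr ⟨⟨hx, hxT⟩, hyQ, hy.2⟩))))
      · have hxQT : x ∉ Q.T := by
          intro hxQT
          exact hxT (hPQ ▸ hPQcap ▸ (⟨hx, hQT_sub hxQT⟩ : x ∈ P.carrier ∩ Q.carrier))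
        by_cases hyRS : y ∈ R.S
        · -- y ∈ R.S = Q.T ⊆ Q.carrier, and y ∉ Q.S
          have hyQ : y ∈ Q.carrier := hQT_sub (hQR ▸ hyRS)
          exact Relation.TransGen.single (Or.inl (Relation.TransGen.single
            (Or.inr (Or.inr ⟨⟨hx, hxT⟩, hyQ, hy.2⟩))))
        · exact Relation.TransGen.single (Or.inr (Or.inr
            ⟨⟨Or.inl hx, hxQT⟩, hyR, hyRS⟩))
  have hlt : ((P.glue Q).glue R).lt = (P.glue (Q.glue R)).lt := by
    funext x y
    exact propext ⟨transGen_le_transGen hLR x y, transGen_le_transGen hRL x y⟩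
  show IIPomset.mk _ _ _ _ _ _ = IIPomset.mk _ _ _ _ _ _
  congr 1
  all_goals first
    | exact carrier_assoc
    | exact hlt
    | (funext x y; exact propext or_assoc)
    | (funext x
       by_cases hx : x ∈ P.carrier <;> by_cases hy : x ∈ Q.carrier <;>
         simp_all [IIPomset.glue, Set.mem_union])
end

section
/- Without autoconcurrency, a well-formed conclist sequence determines a unique pomset: if (U₁ | ⋯ | Uₙ) is a well-formed sequence of conclists in which no conclist contains two distinct events with the same label, then there is exactly one coherent ST-sequence P₁⋯P_{n-1} of starters and terminators such that S_{Pᵢ} = Uᵢ for all i < n and T_{P_{n-1}} = Uₙ. -/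
/-- A starter/terminator letter over alphabet `A`: events in event order, with label
and flags for membership in the starting and terminating interfaces. -/
abbrev STLetter (A : Type*) := List (A × Bool × Bool)

/-- The starting interface of a letter, as a conclist (labels in event order). -/
def sInt {A : Type*} (L : STLetter A) : List A :=
  (L.filter (fun x => x.2.1)).map (fun x => x.1)

/-- The terminating interface of a letter, as a conclist (labels in event order). -/
def tInt {A : Type*} (L : STLetter A) : List A :=
  (L.filter (fun x => x.2.2)).map (fun x => x.1)

def IsStarter {A : Type*} (L : STLetter A) : Prop := ∀ x ∈ L, x.2.2 = true

def IsTerminator {A : Type*} (L : STLetter A) : Prop := ∀ x ∈ L, x.2.1 = true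

section Aux
variable {A : Type*} [DecidableEq A]

/-- canonical starter letter -/
def stForm (V W : List A) : STLetter A := W.map (fun a => (a, decide (a ∈ V), true))

/-- canonical terminator letter -/
def tmForm (V W : List A) : STLetter A := V.map (fun a => (a, true, decide (a ∈ W)))

def canon (V W : List A) : STLetter A :=
  if V.Sublist W then stForm V W else tmForm V W

lemma filt_sub (V W : List A) (h : V.Sublist W) (hW : W.Nodup) :
    W.filter (fun a => decide (a ∈ V)) = V := by
  induction h with
  | slnil => rfl
  | @cons V' W' a h ih =>
    have hna : a ∉ V' := fun hmem => (List.nodup_cons.mp hW).1 (h.subset hmem)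
    simpa [hna] using ih (List.nodup_cons.mp hW).2
  | @cons_cons V' W' a h ih =>
    have hW' := List.nodup_cons.mp hW
    have hcongr : W'.filter (fun b => decide (b ∈ a :: V')) = W'.filter (fun b => decide (b ∈ V')) := by
      apply List.filter_congr
      intro b hb
      have : b ≠ a := fun hba => hW'.1 (hba ▸ hb)
      simp [this]
    rw [List.filter_cons_of_pos (by simp), hcongr, ih hW'.2]

omit [DecidableEq A] in
lemma sInt_sublist (L : STLetter A) : (sInt L).Sublist (L.map (fun x => x.1)) :=
  (List.filter_sublist).map _

omit [DecidableEq A] in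
lemma tInt_sublist (L : STLetter A) : (tInt L).Sublist (L.map (fun x => x.1)) :=
  (List.filter_sublist).map _

lemma sInt_stForm (V W : List A) (h : V.Sublist W) (hW : W.Nodup) : sInt (stForm V W) = V := by
  simp only [sInt, stForm, List.filter_map, Function.comp_def]
  simp [filt_sub V W h hW, Function.comp_def]

lemma tInt_stForm (V W : List A) : tInt (stForm V W) = W := by
  simp [tInt, stForm, List.filter_map, Function.comp_def]

lemma sInt_tmForm (V W : List A) : sInt (tmForm V W) = V := by
  simp [sInt, tmForm, List.filter_map, Function.comp_def]

lemma tInt_tmForm (V W : List A) (h : W.Sublist V) (hV : V.Nodup) : tInt (tmForm V W) = W := by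
  simp only [tInt, tmForm, List.filter_map, Function.comp_def]
  simp [filt_sub W V h hV, Function.comp_def]

lemma stForm_isStarter (V W : List A) : IsStarter (stForm V W) := by
  intro x hx; simp [stForm] at hx; obtain ⟨a, _, rfl⟩ := hx; rfl

lemma tmForm_isTerminator (V W : List A) : IsTerminator (tmForm V W) := by
  intro x hx; simp [tmForm] at hx; obtain ⟨a, _, rfl⟩ := hx; rfl

lemma canon_spec (V W : List A) (h : V.Sublist W ∨ W.Sublist V) (hV : V.Nodup) (hW : W.Nodup) :
    sInt (canon V W) = V ∧ tInt (canon V W) = W ∧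
      (IsStarter (canon V W) ∨ IsTerminator (canon V W)) := by
  unfold canon
  split
  · exact ⟨sInt_stForm V W ‹_› hW, tInt_stForm V W, Or.inl (stForm_isStarter V W)⟩
  · rcases h with h | h
    · exact absurd h ‹_›
    · exact ⟨sInt_tmForm V W, tInt_tmForm V W h hV, Or.inr (tmForm_isTerminator V W)⟩

/-- key: a starter with nodup labels is determined by its interfaces -/
lemma starter_eq (L : STLetter A) (hS : IsStarter L) (h : (L.map (fun x => x.1)).Nodup) :
    L = stForm (sInt L) (L.map (fun x => x.1)) := by
  induction L with
  | nil => rfl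
  | cons x L ih =>
    obtain ⟨a, b, c⟩ := x
    have hc : c = true := hS (a, b, c) List.mem_cons_self
    subst hc
    rw [List.map_cons] at h
    have h' := List.nodup_cons.mp h
    have hS' : IsStarter L := fun y hy => hS y (List.mem_cons_of_mem _ hy)
    have hsub : sInt L ⊆ L.map (fun x => x.1) := (sInt_sublist L).subset
    have hna : a ∉ sInt L := fun hm => h'.1 (hsub hm)
    have htail : (L.map (fun x => x.1)).map (fun a' => (a', decide (a' ∈ sInt ((a, b, true) :: L)), true)) = L := by
      have : ∀ a' ∈ L.map (fun x => x.1),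
          (a', decide (a' ∈ sInt ((a, b, true) :: L)), true) = (a', decide (a' ∈ sInt L), true) := by
        intro a' ha'
        have hne : a' ≠ a := fun he => h'.1 (he ▸ ha')
        cases b with
        | true => simp [sInt, hne]
        | false => simp [sInt]
      rw [List.map_congr_left this]
      exact (ih hS' h'.2).symm
    cases b with
    | true =>
      have hhead : decide (a ∈ sInt ((a, true, true) :: L)) = true := by simp [sInt]
      simp only [stForm, List.map_cons, hhead, htail]
    | false =>
      have hhead : decide (a ∈ sInt ((a, false, true) :: L)) = false := by
        have he : sInt ((a, false, true) :: L) = sInt L := by simp [sInt]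
        rw [he]
        exact decide_eq_false hna
      simp only [stForm, List.map_cons, hhead, htail]

lemma terminator_eq (L : STLetter A) (hT : IsTerminator L) (h : (L.map (fun x => x.1)).Nodup) :
    L = tmForm (L.map (fun x => x.1)) (tInt L) := by
  induction L with
  | nil => rfl
  | cons x L ih =>
    obtain ⟨a, b, c⟩ := x
    have hb : b = true := hT (a, b, c) List.mem_cons_self
    subst hb
    rw [List.map_cons] at h
    have h' := List.nodup_cons.mp h
    have hT' : IsTerminator L := fun y hy => hT y (List.mem_cons_of_mem _ hy)
    have hsub : tInt L ⊆ L.map (fun x => x.1) := (tInt_sublist L).subset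
    have hna : a ∉ tInt L := fun hm => h'.1 (hsub hm)
    have htail : (L.map (fun x => x.1)).map (fun a' => (a', true, decide (a' ∈ tInt ((a, true, c) :: L)))) = L := by
      have : ∀ a' ∈ L.map (fun x => x.1),
          (a', true, decide (a' ∈ tInt ((a, true, c) :: L))) = (a', true, decide (a' ∈ tInt L)) := by
        intro a' ha'
        have hne : a' ≠ a := fun he => h'.1 (he ▸ ha')
        cases c with
        | true => simp [tInt, hne]
        | false => simp [tInt]
      rw [List.map_congr_left this]
      exact (ih hT' h'.2).symm
    cases c with
    | true =>
      have hhead : decide (a ∈ tInt ((a, true, true) :: L)) = true := by simp [tInt]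
      simp only [tmForm, List.map_cons, hhead, htail]
    | false =>
      have hhead : decide (a ∈ tInt ((a, true, false) :: L)) = false := by
        have he : tInt ((a, true, false) :: L) = tInt L := by simp [tInt]
        rw [he]
        exact decide_eq_false hna
      simp only [tmForm, List.map_cons, hhead, htail]

lemma stForm_self (V : List A) : stForm V V = tmForm V V := by
  unfold stForm tmForm
  apply List.map_congr_left
  intro a ha; simp [ha]

lemma uniq (V W : List A) (hV : V.Nodup) (hW : W.Nodup) (L : STLetter A)
    (hL : IsStarter L ∨ IsTerminator L) (hs : sInt L = V) (ht : tInt L = W) :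
    L = canon V W := by
  rcases hL with hSt | hTm
  · have hfil : L.filter (fun x => x.2.2) = L := List.filter_eq_self.mpr hSt
    have hmap : L.map (fun x => x.1) = W := by rw [← ht]; simp [tInt, hfil]
    have hVW : V.Sublist W := by rw [← hs, ← hmap]; exact sInt_sublist L
    have := starter_eq L hSt (hmap ▸ hW)
    rw [canon, if_pos hVW, ← hs, ← hmap]
    exact this
  · have hfil : L.filter (fun x => x.2.1) = L := List.filter_eq_self.mpr hTm
    have hmap : L.map (fun x => x.1) = V := by rw [← hs]; simp [sInt, hfil]
    have hWV : W.Sublist V := by rw [← ht, ← hmap]; exact tInt_sublist L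
    have hLt : L = tmForm V W := by
      have := terminator_eq L hTm (hmap ▸ hV)
      rw [hmap, ht] at this; exact this
    rw [canon]
    split
    · have : V = W := List.Sublist.antisymm ‹_› hWV
      subst this
      rw [hLt, stForm_self]
    · exact hLt

end Aux

/-- Without autoconcurrency, a well-formed conclist sequence `(U₀ | ⋯ | U_{n-1})`
(consecutive conclists comparable as sublists, each with pairwise distinct labels)
determines a unique coherent ST-sequence `P₀ ⋯ P_{n-2}` of starters and terminators
with `S_{Pᵢ} = Uᵢ` for `i < n-1` and `T_{P_{n-2}} = U_{n-1}`. -/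
theorem stmt5 {A : Type*} [DecidableEq A] (n : ℕ) (hn : 2 ≤ n) (U : ℕ → List A)
    (hwf : ∀ i, i + 1 ≤ n - 1 →
      List.Sublist (U i) (U (i + 1)) ∨ List.Sublist (U (i + 1)) (U i))
    (hnodup : ∀ i < n, (U i).Nodup) :
    ∃! P : List (STLetter A),
      P.length = n - 1 ∧
      (∀ L ∈ P, IsStarter L ∨ IsTerminator L) ∧
      (∀ i, i + 1 < n - 1 → tInt (P.getD i []) = sInt (P.getD (i + 1) [])) ∧
      (∀ i < n - 1, sInt (P.getD i []) = U i) ∧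
      tInt (P.getD (n - 2) []) = U (n - 1) := by
  set P : List (STLetter A) := List.ofFn (fun i : Fin (n - 1) => canon (U i) (U (i + 1))) with hP
  have hPlen : P.length = n - 1 := by simp [hP]
  have hPget : ∀ i, i < n - 1 → P.getD i [] = canon (U i) (U (i + 1)) := by
    intro i hi
    rw [List.getD_eq_getElem _ _ (by omega : i < P.length)]
    simp only [hP, List.getElem_ofFn]
  have hspec : ∀ i, i < n - 1 →
      sInt (canon (U i) (U (i + 1))) = U i ∧ tInt (canon (U i) (U (i + 1))) = U (i + 1) ∧
        (IsStarter (canon (U i) (U (i + 1))) ∨ IsTerminator (canon (U i) (U (i + 1)))) := by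
    intro i hi
    exact canon_spec _ _ (hwf i (by omega)) (hnodup i (by omega)) (hnodup (i + 1) (by omega))
  refine ⟨P, ⟨hPlen, ?_, ?_, ?_, ?_⟩, ?_⟩
  · intro L hL
    rw [hP, List.mem_ofFn] at hL
    obtain ⟨i, rfl⟩ := hL
    exact (hspec i i.isLt).2.2
  · intro i hi
    rw [hPget i (by omega), hPget (i + 1) hi, (hspec i (by omega)).2.1,
      (hspec (i + 1) hi).1]
  · intro i hi
    rw [hPget i hi]; exact (hspec i hi).1
  · have h2 : n - 2 < n - 1 := by omega
    rw [hPget (n - 2) h2]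
    have : n - 2 + 1 = n - 1 := by omega
    rw [(hspec (n - 2) h2).2.1, this]
  · rintro Q ⟨hQlen, hQst, hQch, hQs, hQt⟩
    apply List.ext_getElem (by omega)
    intro i h1 h2
    have hi : i < n - 1 := by omega
    have hQget : Q.getD i [] = Q[i] := List.getD_eq_getElem _ _ h1
    have hmem : Q[i] ∈ Q := List.getElem_mem _
    have hsQ : sInt Q[i] = U i := by rw [← hQget]; exact hQs i hi
    have htQ : tInt Q[i] = U (i + 1) := by
      rcases (by omega : i + 1 < n - 1 ∨ i = n - 2) with h | h
      · rw [← hQget, hQch i h, List.getD_eq_getElem _ _ (by omega : i + 1 < Q.length)]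
        rw [← List.getD_eq_getElem Q _ (by omega : i + 1 < Q.length)]
        exact hQs (i + 1) h
      · subst h
        rw [← hQget, hQt]
        congr 1
        omega
    rw [uniq (U i) (U (i + 1)) (hnodup i (by omega)) (hnodup (i + 1) (by omega)) Q[i]
      (hQst _ hmem) hsQ htQ]
    rw [← List.getD_eq_getElem P [] h2, hPget i hi]
end

section
/- For every non-final concstate (T, U) of an interval pomset with interfaces P, exactly one of the following holds: (a) there exists x ∈ U \ T_P such that every y ∈ P incomparable with x under <P belongs to U ∪ T (an event can be terminated), or (b) there exists x ∈ P \ (U ∪ T) such that every y with y <P x belongs to T (an event can be started). -/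
/-- Dichotomy for non-final concstates: for every non-final concstate `(T, U)` of a
finite interval pomset with terminating interface `TP`, exactly one of the following
holds: (a) some event of `U \ TP` can be terminated (every event incomparable with it is
already in `U ∪ T`), or (b) some fresh event can be started (all its predecessors are in
`T`). -/
theorem stmt7 {E : Type*} [Fintype E] (lt : E → E → Prop)
    (hint : IsIntervalOrder lt)
    (TP : Set E) (hTPmax : ∀ x ∈ TP, ∀ y, ¬ lt x y)
    (T U : Set E)
    (hTTP : T ∩ TP = ∅)
    (hUT : U ∩ T = ∅)
    (hanti : ∀ x ∈ U, ∀ y ∈ U, ¬ lt x y)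
    (hTdc : ∀ x y, lt x y → y ∈ T → x ∈ T)
    (huc : ∀ x y, lt x y → x ∉ T ∪ U → y ∉ T ∪ U)
    (hnonfinal : ¬ (T = Set.univ \ TP ∧ U = TP)) :
    Xor'
      (∃ x, x ∈ U ∧ x ∉ TP ∧ ∀ y, (¬ lt x y ∧ ¬ lt y x) → y ∈ U ∪ T)
      (∃ x, x ∉ U ∪ T ∧ ∀ y, lt y x → y ∈ T) := by
  classical
  obtain ⟨Ilo, Ihi, hle, hltc⟩ := hint
  -- Exclusivity
  have hnotboth : ¬ ((∃ x, x ∈ U ∧ x ∉ TP ∧ ∀ y, (¬ lt x y ∧ ¬ lt y x) → y ∈ U ∪ T) ∧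
      (∃ x, x ∉ U ∪ T ∧ ∀ y, lt y x → y ∈ T)) := by
    rintro ⟨⟨x, hxU, hxTP, hx⟩, ⟨z, hz, hzpred⟩⟩
    by_cases h1 : lt x z
    · have hxT : x ∈ T := hzpred x h1
      have : x ∈ U ∩ T := ⟨hxU, hxT⟩
      rw [hUT] at this; exact this
    by_cases h2 : lt z x
    · have hz' : z ∉ T ∪ U := by
        intro hmem
        exact hz (by rcases hmem with h | h
                     · exact Set.mem_union_right _ h
                     · exact Set.mem_union_left _ h)
      have := huc z x h2 hz'
      exact this (Set.mem_union_right _ hxU)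
    · exact hz (hx z ⟨h1, h2⟩)
  -- Existence
  have hor : (∃ x, x ∈ U ∧ x ∉ TP ∧ ∀ y, (¬ lt x y ∧ ¬ lt y x) → y ∈ U ∪ T) ∨
      (∃ x, x ∉ U ∪ T ∧ ∀ y, lt y x → y ∈ T) := by
    set F : Finset E := Finset.univ.filter (fun z => z ∉ U ∪ T) with hFdef
    by_cases hF : F.Nonempty
    · -- there is a fresh event; pick one with minimal lower endpoint
      obtain ⟨x, hxF, hxmin⟩ := F.exists_min_image Ilo hF
      have hxfresh : x ∉ U ∪ T := by simpa [hFdef] using hxF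
      by_cases hb : ∀ y, lt y x → y ∈ T
      · exact Or.inr ⟨x, hxfresh, hb⟩
      · push_neg at hb
        obtain ⟨u, hux, huT⟩ := hb
        have huU : u ∈ U := by
          by_contra huU
          have huF : u ∈ F := by
            simp only [hFdef, Finset.mem_filter, Finset.mem_univ, true_and]
            intro h
            rcases h with h | h
            exacts [huU h, huT h]
          have h1 : Ilo x ≤ Ilo u := hxmin u huF
          have h2 : Ihi u < Ilo x := (hltc u x).1 hux
          linarith [hle u]
        refine Or.inl ⟨u, huU, fun huTP => hTPmax u huTP x hux, fun y ⟨hy1, hy2⟩ => ?_⟩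
        by_contra hyUT
        have hyF : y ∈ F := by simpa [hFdef] using hyUT
        have h1 : Ilo x ≤ Ilo y := hxmin y hyF
        have h2 : Ihi u < Ilo x := (hltc u x).1 hux
        exact hy1 ((hltc u y).2 (by linarith))
    · -- no fresh event: T ∪ U = univ
      have hall : ∀ z : E, z ∈ U ∪ T := by
        intro z
        by_contra hz
        exact hF ⟨z, by simpa [hFdef] using hz⟩
      have hTPU : TP ⊆ U := by
        intro z hzTP
        rcases hall z with h | h
        · exact h
        · exfalso
          have : z ∈ T ∩ TP := ⟨h, hzTP⟩
          rw [hTTP] at this; exact this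
      have hUne : U ≠ TP := by
        intro hU
        apply hnonfinal
        refine ⟨?_, hU⟩
        ext z
        constructor
        · intro hzT
          refine ⟨Set.mem_univ z, fun hzTP => ?_⟩
          have : z ∈ T ∩ TP := ⟨hzT, hzTP⟩
          rw [hTTP] at this; exact this
        · rintro ⟨-, hzTP⟩
          rcases hall z with h | h
          · exact absurd (hU ▸ h) hzTP
          · exact h
      obtain ⟨x, hxU, hxTP⟩ : ∃ x, x ∈ U ∧ x ∉ TP := by
        by_contra h
        push_neg at h
        exact hUne (Set.Subset.antisymm (fun z hz => h z hz) hTPU)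
      exact Or.inl ⟨x, hxU, hxTP, fun y _ => hall y⟩
  rcases hor with h | h
  · exact Or.inl ⟨h, fun hb => hnotboth ⟨h, hb⟩⟩
  · exact Or.inr ⟨h, fun ha => hnotboth ⟨ha, h⟩⟩
end

section
/- For the SPTL 'next' operator on concstates, if (T, U) is a concstate of P and case (a) of the dichotomy holds with X the set of all terminable events, then (T ∪ X, U \ X) is again a concstate of P; symmetrically, if case (b) holds with X the set of all startable events, then (T, U ∪ X) is again a concstate of P. -/
/-- `(T, U)` is a concstate of the pomset with precedence `lt` and terminating interface
`TP` (carrier the whole universe). -/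
def Concstate {E : Type*} (lt : E → E → Prop) (TP T U : Set E) : Prop :=
  T ∩ TP = ∅ ∧ U ∩ T = ∅ ∧ (∀ x ∈ U, ∀ y ∈ U, ¬ lt x y) ∧
    (∀ x y, lt x y → y ∈ T → x ∈ T) ∧
    (∀ x y, lt x y → x ∉ T ∪ U → y ∉ T ∪ U)

/-- Case (a): the set of all terminable events of the concstate `(T, U)`. -/
def termSet {E : Type*} (lt : E → E → Prop) (TP T U : Set E) : Set E :=
  {x | x ∈ U ∧ x ∉ TP ∧ ∀ y, (¬ lt x y ∧ ¬ lt y x) → y ∈ U ∪ T}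

/-- Case (b): the set of all startable events of the concstate `(T, U)`. -/
def startSet {E : Type*} (lt : E → E → Prop) (T U : Set E) : Set E :=
  {x | x ∉ U ∧ x ∉ T ∧ ∀ y, lt y x → y ∈ T}

/-- The SPTL 'next' step preserves concstates: if `(T, U)` is a concstate and case (a)
holds, with `X` the set of all terminable events, then `(T ∪ X, U \ X)` is a concstate;
symmetrically, if case (b) holds, with `X` the set of all startable events, then
`(T, U ∪ X)` is a concstate. -/
theorem stmt14 {E : Type*} (lt : E → E → Prop) (TP T U : Set E)
    (h : Concstate lt TP T U) :
    ((termSet lt TP T U).Nonempty →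
      Concstate lt TP (T ∪ termSet lt TP T U) (U \ termSet lt TP T U)) ∧
    ((startSet lt T U).Nonempty →
      Concstate lt TP T (U ∪ startSet lt T U)) := by

  obtain ⟨h1, h2, h3, h4, h5⟩ := h
  have hUT : ∀ x, x ∈ U → x ∉ T := by
    intro x hxU hxT
    exact absurd (Set.mem_inter hxU hxT) (by rw [h2]; exact Set.notMem_empty x)
  constructor
  · intro _
    refine ⟨?_, ?_, ?_, ?_, ?_⟩
    · apply Set.eq_empty_iff_forall_notMem.mpr
      intro x hx
      rcases hx with ⟨hx1, hx2⟩
      rcases hx1 with hx1 | hx1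
      · exact absurd (Set.mem_inter hx1 hx2) (by rw [h1]; exact Set.notMem_empty x)
      · exact hx1.2.1 hx2
    · apply Set.eq_empty_iff_forall_notMem.mpr
      intro x hx
      rcases hx with ⟨⟨hxU, hxX⟩, hx2⟩
      rcases hx2 with hx2 | hx2
      · exact hUT x hxU hx2
      · exact hxX hx2
    · intro x hx y hy
      exact h3 x hx.1 y hy.1
    · intro x y hlt hy
      rcases hy with hy | hy
      · exact Or.inl (h4 x y hlt hy)
      · -- y ∈ termSet, so y ∈ U; show x ∈ T
        left
        by_contra hxT
        by_cases hxU : x ∈ U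
        · exact h3 x hxU y hy.1 hlt
        · exact h5 x y hlt (by rintro (h'|h') <;> [exact hxT h'; exact hxU h'])
            (Or.inr hy.1)
    · intro x y hlt hx hy
      have hxT : x ∉ T := fun h' => hx (Or.inl (Or.inl h'))
      have hxU : x ∉ U := by
        intro hxU
        by_cases hxX : x ∈ termSet lt TP T U
        · exact hx (Or.inl (Or.inr hxX))
        · exact hx (Or.inr ⟨hxU, hxX⟩)
      have hy' := h5 x y hlt (by rintro (h'|h') <;> [exact hxT h'; exact hxU h'])
      rcases hy with hy | hy
      · rcases hy with hy | hy
        · exact hy' (Or.inl hy)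
        · exact hy' (Or.inr hy.1)
      · exact hy' (Or.inr hy.1)
  · intro _
    refine ⟨h1, ?_, ?_, h4, ?_⟩
    · apply Set.eq_empty_iff_forall_notMem.mpr
      intro x hx
      rcases hx with ⟨hx1, hx2⟩
      rcases hx1 with hx1 | hx1
      · exact hUT x hx1 hx2
      · exact hx1.2.1 hx2
    · intro x hx y hy hlt
      rcases hx with hx | hx <;> rcases hy with hy | hy
      · exact h3 x hx y hy hlt
      · exact hUT x hx (hy.2.2 x hlt)
      · exact h5 x y hlt (by rintro (h'|h') <;> [exact hx.2.1 h'; exact hx.1 h'])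
          (Or.inr hy)
      · exact hx.2.1 (hy.2.2 x hlt)
    · intro x y hlt hx hy
      have hxT : x ∉ T := fun h' => hx (Or.inl h')
      have hxU : x ∉ U := fun h' => hx (Or.inr (Or.inl h'))
      have hy' := h5 x y hlt (by rintro (h'|h') <;> [exact hxT h'; exact hxU h'])
      rcases hy with hy | hy
      · exact hy' (Or.inl hy)
      · rcases hy with hy | hy
        · exact hy' (Or.inr hy)
        · exact hxT (hy.2.2 x hlt)
end
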